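/- arXiv:2308.14919 — 2 statements merged into one kernel-verified Lean document; each statement's English description precedes it below -/
import Mathlib

section
/- Potential-based reward shaping can strictly decrease MEHC: For the two-state MDP M with states {s_1, s_2}, actions {a_1, a_2}, r_max = 1, parameters 0 < β < α < 1 and ε ∈ (0,1), where action a_1 stays in the current state with probability 1, action a_2 switches to the other state with probability ε and stays with probability 1 − ε, and mean rewards are 1 − α for both actions at s_1 and 1 − β for both actions at s_2: (i) κ(M) = α/ε; (ii) with potential φ(s_1) = 0, φ(s_2) = (α − β)/(2ε), the shaped MDP satisfies κ(M^φ) = (α + β)/(2ε) < κ(M). -/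
open scoped ENNReal

noncomputable section

/-- The probability that a Markov chain with transition kernel `Q` started at `s`
traverses exactly the initial path segment `path`. -/
def pathProb {S : Type*} [DecidableEq S] (Q : S → S → ℝ≥0∞) (s : S) {t : ℕ}
    (path : Fin (t + 1) → S) : ℝ≥0∞ :=
  (if path 0 = s then 1 else 0) * ∏ i : Fin t, Q (path i.castSucc) (path i.succ)

/-- The expected hitting time `E[h_{s→s'}]` of `s'` from `s` for the kernel `Q`,
via `E[h] = ∑_t P[h > t]`, where `h > t` iff the path avoids `s'` up to time `t`. -/
def hitTimeE {S : Type*} [Fintype S] [DecidableEq S] (Q : S → S → ℝ≥0∞) (s s' : S) :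
    ℝ≥0∞ :=
  ∑' t : ℕ, ∑ path : Fin (t + 1) → S,
    if ∀ i, path i ≠ s' then pathProb Q s path else 0

/-- The expected hitting cost `E[∑_{t=0}^{h_{s→s'}-1} c(s_t)]` of `s'` from `s`
for the kernel `Q` and per-state cost `c`. -/
def hitCostE {S : Type*} [Fintype S] [DecidableEq S] (Q : S → S → ℝ≥0∞) (c : S → ℝ≥0∞)
    (s s' : S) : ℝ≥0∞ :=
  ∑' t : ℕ, ∑ path : Fin (t + 1) → S,
    if ∀ i, path i ≠ s' then pathProb Q s path * c (path (Fin.last t)) else 0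

/-- The state-transition kernel induced by following policy `π` in an MDP with
transition function `p`. -/
def polKernel {S A : Type*} (p : S → A → S → ℝ≥0∞) (π : S → A) : S → S → ℝ≥0∞ :=
  fun s s' => p s (π s) s'

/-- The diameter `D(M) = max_{s,s'} min_π E[h_{s→s'}(M,π)]` of an MDP. -/
def diam {S A : Type*} [Fintype S] [DecidableEq S] (p : S → A → S → ℝ≥0∞) : ℝ≥0∞ :=
  ⨆ s, ⨆ s', ⨅ π : S → A, hitTimeE (polKernel p π) s s'

/-- The maximum expected hitting cost
`κ(M) = max_{s,s'} min_π E[∑_{t=0}^{h_{s→s'}(M,π)-1} (r_max - r_t)]` of an MDP with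
mean rewards `rbar`. -/
def mehc {S A : Type*} [Fintype S] [DecidableEq S] (p : S → A → S → ℝ≥0∞) (rmax : ℝ)
    (rbar : S → A → ℝ) : ℝ≥0∞ :=
  ⨆ s, ⨆ s', ⨅ π : S → A,
    hitCostE (polKernel p π) (fun x => ENNReal.ofReal (rmax - rbar x (π x))) s s'

/-- The mean rewards of the PBRS-shaped MDP `M^φ`. -/
def shapedRbar {S A : Type*} [Fintype S] (p : S → A → S → ℝ≥0∞) (rbar : S → A → ℝ)
    (φ : S → ℝ) : S → A → ℝ :=
  fun s a => rbar s a - φ s + ∑ s', (p s a s').toReal * φ s'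

/-- The transitions of the two-state example MDP: at either state, action `a₁ = 0`
stays put with probability `1`, and action `a₂ = 1` switches to the other state with
probability `ε` and stays with probability `1 - ε`. -/
def exP (ε : ℝ) : Fin 2 → Fin 2 → Fin 2 → ℝ≥0∞ := fun s a s' =>
  if a = 0 then (if s' = s then 1 else 0)
  else (if s' = s then ENNReal.ofReal (1 - ε) else ENNReal.ofReal ε)

/-- The mean rewards of the two-state example MDP: `1 - α` for both actions at `s₁`
and `1 - β` for both actions at `s₂`. -/
def exRbar (α β : ℝ) : Fin 2 → Fin 2 → ℝ := fun s _ => if s = 0 then 1 - α else 1 - β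

/-- The shaping potential `φ(s₁) = 0`, `φ(s₂) = (α - β)/(2ε)`. -/
def exPot (α β ε : ℝ) : Fin 2 → ℝ := fun s => if s = 0 then 0 else (α - β) / (2 * ε)

/-!
Under a policy that takes `a₁` at the start state `s`, the chain never leaves `s`, so the
hitting cost is infinite as soon as staying at `s` is costly; under `a₂` the chain waits a
geometric time of mean `1/ε` at `s`, so the cheapest way from `s` to the other state costs
`(r_max - r̄(s, a₂))/ε`. Hence `κ` is decided by the reward of `a₂` at the worse state. The
potential `φ` adds `ε (φ(s') - φ(s))` to that reward, which for the given `φ` makes it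
`1 - (α + β)/2` at both states instead of `1 - α` at `s₁`.
-/

lemma hitCostE_self {S : Type*} [Fintype S] [DecidableEq S] (Q : S → S → ℝ≥0∞)
    (c : S → ℝ≥0∞) (s : S) : hitCostE Q c s s = 0 := by
  refine ENNReal.tsum_eq_zero.mpr fun t => Finset.sum_eq_zero fun path _ => ?_
  split_ifs with h
  · simp [pathProb, h 0]
  · rfl

/-- With two states, the only path from `s` avoiding `s' ≠ s` stays at `s`, so the
hitting cost is a geometric series. -/
lemma hitCostE_fin_two_of_ne (Q : Fin 2 → Fin 2 → ℝ≥0∞) (c : Fin 2 → ℝ≥0∞) {s s' : Fin 2}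
    (h : s ≠ s') : hitCostE Q c s s' = c s * (1 - Q s s)⁻¹ := by
  have hstay : ∀ x : Fin 2, x ≠ s' → x = s := by revert s s'; decide
  have hterm : ∀ t : ℕ,
      (∑ path : Fin (t + 1) → Fin 2,
        if ∀ i, path i ≠ s' then pathProb Q s path * c (path (Fin.last t)) else 0)
      = Q s s ^ t * c s := by
    intro t
    rw [Finset.sum_eq_single_of_mem (fun _ => s) (Finset.mem_univ _)]
    · simp [h, pathProb, Finset.prod_const]
    · intro path _ hpath
      exact if_neg fun havoid => hpath (funext fun i => hstay _ (havoid i))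
  simp only [hitCostE, hterm]
  rw [ENNReal.tsum_mul_right, ENNReal.tsum_geometric, mul_comm]

section TwoStateExample

variable {ε : ℝ}

lemma polKernel_exP_self (π : Fin 2 → Fin 2) (s : Fin 2) :
    polKernel (exP ε) π s s = if π s = 0 then 1 else ENNReal.ofReal (1 - ε) := by
  by_cases hπ : π s = 0 <;> simp [polKernel, exP, hπ]

lemma hitCostE_exP_of_ne (hε1 : ε ≤ 1) (π : Fin 2 → Fin 2) (c : Fin 2 → ℝ≥0∞)
    {s s' : Fin 2} (h : s ≠ s') :
    hitCostE (polKernel (exP ε) π) c s s'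
      = if π s = 0 then c s * ⊤ else c s / ENNReal.ofReal ε := by
  rw [hitCostE_fin_two_of_ne _ _ h, polKernel_exP_self]
  split_ifs
  · simp
  · rw [← ENNReal.ofReal_one, ← ENNReal.ofReal_sub _ (by linarith), sub_sub_cancel,
      div_eq_mul_inv]

lemma iInf_hitCostE_exP_le (hε0 : 0 < ε) (hε1 : ε ≤ 1) (rmax : ℝ) (rbar : Fin 2 → Fin 2 → ℝ)
    {s s' : Fin 2} (h : s ≠ s') :
    ⨅ π : Fin 2 → Fin 2,
        hitCostE (polKernel (exP ε) π) (fun x => ENNReal.ofReal (rmax - rbar x (π x))) s s'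
      ≤ ENNReal.ofReal ((rmax - rbar s 1) / ε) := by
  refine iInf_le_of_le (fun _ => 1) ?_
  rw [hitCostE_exP_of_ne hε1 _ _ h, if_neg one_ne_zero, ENNReal.ofReal_div_of_pos hε0]

lemma iInf_hitCostE_exP (hε0 : 0 < ε) (hε1 : ε ≤ 1) {rmax : ℝ} {rbar : Fin 2 → Fin 2 → ℝ}
    {s s' : Fin 2} (h : s ≠ s') (hstay : rbar s 0 < rmax) :
    ⨅ π : Fin 2 → Fin 2,
        hitCostE (polKernel (exP ε) π) (fun x => ENNReal.ofReal (rmax - rbar x (π x))) s s'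
      = ENNReal.ofReal ((rmax - rbar s 1) / ε) := by
  refine (iInf_hitCostE_exP_le hε0 hε1 rmax rbar h).antisymm (le_iInf fun π => ?_)
  rw [hitCostE_exP_of_ne hε1 _ _ h]
  rcases Fin.exists_fin_two.mp ⟨π s, rfl⟩ with hπ | hπ
  · rw [hπ, if_pos rfl, ENNReal.mul_top (ENNReal.ofReal_pos.mpr (sub_pos.mpr hstay)).ne']
    exact le_top
  · rw [hπ, if_neg one_ne_zero, ENNReal.ofReal_div_of_pos hε0]

lemma mehc_exP (hε0 : 0 < ε) (hε1 : ε ≤ 1) {rmax : ℝ} {rbar : Fin 2 → Fin 2 → ℝ}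
    (hstay : rbar 0 0 < rmax) (hswitch : rbar 0 1 ≤ rbar 1 1) :
    mehc (exP ε) rmax rbar = ENNReal.ofReal ((rmax - rbar 0 1) / ε) := by
  refine le_antisymm (iSup₂_le fun s s' => ?_) ?_
  · by_cases h : s = s'
    · subst h
      exact iInf_le_of_le (fun _ => 0) (by simp [hitCostE_self])
    · refine (iInf_hitCostE_exP_le hε0 hε1 rmax rbar h).trans (ENNReal.ofReal_le_ofReal ?_)
      refine div_le_div_of_nonneg_right ?_ hε0.le
      obtain rfl | rfl := Fin.exists_fin_two.mp ⟨s, rfl⟩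
      · exact le_rfl
      · exact sub_le_sub_left hswitch rmax
  · exact le_iSup₂_of_le (f := fun s s' => ⨅ π : Fin 2 → Fin 2, _) 0 1
      (iInf_hitCostE_exP hε0 hε1 Fin.zero_ne_one hstay).ge

lemma shapedRbar_exP_stay (rbar : Fin 2 → Fin 2 → ℝ) (φ : Fin 2 → ℝ) (s : Fin 2) :
    shapedRbar (exP ε) rbar φ s 0 = rbar s 0 := by
  fin_cases s <;> simp [shapedRbar, exP, Fin.sum_univ_two]

lemma shapedRbar_exP_switch (hε0 : 0 ≤ ε) (hε1 : ε ≤ 1) (rbar : Fin 2 → Fin 2 → ℝ)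
    (φ : Fin 2 → ℝ) {s s' : Fin 2} (h : s ≠ s') :
    shapedRbar (exP ε) rbar φ s 1 = rbar s 1 + ε * (φ s' - φ s) := by
  have hs' : s' = s + 1 := by revert s s'; decide
  subst hs'
  obtain rfl | rfl := Fin.exists_fin_two.mp ⟨s, rfl⟩ <;>
    simp [shapedRbar, exP, Fin.sum_univ_two, ENNReal.toReal_ofReal hε0,
      ENNReal.toReal_ofReal (sub_nonneg.mpr hε1)] <;> ring

lemma shapedRbar_ex_switch {α β : ℝ} (hε0 : 0 < ε) (hε1 : ε ≤ 1) (s : Fin 2) :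
    shapedRbar (exP ε) (exRbar α β) (exPot α β ε) s 1 = 1 - (α + β) / 2 := by
  rw [shapedRbar_exP_switch hε0.le hε1 _ _ (s' := s + 1) (by revert s; decide)]
  obtain rfl | rfl := Fin.exists_fin_two.mp ⟨s, rfl⟩ <;>
    · simp only [exRbar, exPot, Fin.isValue, if_true, if_false, zero_add, one_ne_zero,
        Fin.reduceAdd]
      field_simp
      ring

end TwoStateExample

theorem stmt14_general (α β ε : ℝ) (hβ0 : 0 < β) (hβα : β < α)
    (hε0 : 0 < ε) (hε1 : ε < 1) :
    mehc (exP ε) 1 (exRbar α β) = ENNReal.ofReal (α / ε)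
    ∧ mehc (exP ε) 1 (shapedRbar (exP ε) (exRbar α β) (exPot α β ε))
        = ENNReal.ofReal ((α + β) / (2 * ε))
    ∧ mehc (exP ε) 1 (shapedRbar (exP ε) (exRbar α β) (exPot α β ε))
        < mehc (exP ε) 1 (exRbar α β) := by
  have hκ : mehc (exP ε) 1 (exRbar α β) = ENNReal.ofReal (α / ε) := by
    rw [mehc_exP hε0 hε1.le (by simp [exRbar]; linarith) (by simp [exRbar]; linarith)]
    simp [exRbar]
  have hκφ : mehc (exP ε) 1 (shapedRbar (exP ε) (exRbar α β) (exPot α β ε))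
      = ENNReal.ofReal ((α + β) / (2 * ε)) := by
    rw [mehc_exP hε0 hε1.le (by simp [shapedRbar_exP_stay, exRbar]; linarith)
      (by rw [shapedRbar_ex_switch hε0 hε1.le, shapedRbar_ex_switch hε0 hε1.le]),
      shapedRbar_ex_switch hε0 hε1.le, sub_sub_cancel, div_div]
  refine ⟨hκ, hκφ, ?_⟩
  rw [hκ, hκφ, ENNReal.ofReal_lt_ofReal_iff (div_pos (by linarith) hε0), ← div_div]
  exact div_lt_div_of_pos_right (by linarith) hε0

/-- for the two-state example MDP with `0 < β < α < 1`, `ε ∈ (0,1)` and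
`r_max = 1`: (i) `κ(M) = α/ε`; (ii) with the potential `φ`, `κ(M^φ) = (α+β)/(2ε) < κ(M)`. -/
theorem stmt14 (α β ε : ℝ) (hβ0 : 0 < β) (hβα : β < α) (hα1 : α < 1)
    (hε0 : 0 < ε) (hε1 : ε < 1) :
    mehc (exP ε) 1 (exRbar α β) = ENNReal.ofReal (α / ε)
    ∧ mehc (exP ε) 1 (shapedRbar (exP ε) (exRbar α β) (exPot α β ε))
        = ENNReal.ofReal ((α + β) / (2 * ε))
    ∧ mehc (exP ε) 1 (shapedRbar (exP ε) (exRbar α β) (exPot α β ε))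
        < mehc (exP ε) 1 (exRbar α β) :=
  stmt14_general α β ε hβ0 hβα hε0 hε1
end
end

section
/- No exponential concentration of first return times in terms of the expected recurrence time: There do not exist constants a > 0 and b > 0 such that for every Markov chain on a finite state space, every state s with finite expected recurrence time ρ_s, and every t > 0, P_s[ H_s^+ ≥ t ] ≤ a·e^{−t/(b·ρ_s)}. In particular, for each k ≥ 3, the Markov chain M_k on states {s_1, …, s_k} in which s_1 transitions to itself with probability 1 − 1/(k−1) and to s_2 with probability 1/(k−1), and s_j transitions deterministically to s_{j+1} for 2 ≤ j ≤ k−1 with s_k transitioning deterministically to s_1, satisfies ρ_{s_1} = 2 and P_{s_1}[ H_{s_1}^+ = k ] = 1/(k−1), which violates any such bound for k large enough. -/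
open MeasureTheory ProbabilityTheory Filter
open scoped ENNReal ENat

noncomputable section

/-- The first return time to `s` of the process `X` (`⊤` if `s` is never revisited). -/
def retTime {S Ω : Type*} (X : ℕ → Ω → S) (s : S) (ω : Ω) : ℕ∞ :=
  ⨅ (m : ℕ) (_ : 0 < m ∧ X m ω = s), (m : ℕ∞)

/-- The transition kernel of the Markov chain `M_k` on states `{0, …, k-1}`:
state `0` loops with probability `1 - 1/(k-1)` and moves to state `1` with
probability `1/(k-1)`; states `1, …, k-2` move deterministically to the next state,
and state `k-1` moves deterministically back to `0`. -/
def mkKernel (k : ℕ) : Fin k → Fin k → ℝ≥0∞ := fun i j =>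
  if (i : ℕ) = 0 then
    (if (j : ℕ) = 0 then 1 - 1 / ((k : ℝ≥0∞) - 1)
     else if (j : ℕ) = 1 then 1 / ((k : ℝ≥0∞) - 1) else 0)
  else if (i : ℕ) + 1 = k then (if (j : ℕ) = 0 then 1 else 0)
  else (if (j : ℕ) = (i : ℕ) + 1 then 1 else 0)

/-!
Started at `0`, the chain `M_k` either returns at once, with probability `1 - 1/(k-1)`, or runs
once around the cycle `0 → 1 → ⋯ → k-1 → 0`, with probability `1/(k-1)`, and these two paths
carry all the mass. Hence `ρ = (1 - 1/(k-1)) + k/(k-1) = 2`, while `P[H ≥ k] ≥ 1/(k-1)` decays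
only polynomially in `k`, which no bound `a e^{-k/(2b)}` allows for large `k`.
Chains with a prescribed kernel `P` exist: iterate independent random maps `f_t : S → S`, each
`f_t x` having law `P x ·`.
-/

open Finset Topology

section Markov

variable {S Ω : Type*}

def IsMarkovChain [MeasurableSpace Ω] (μ : Measure Ω) (X : ℕ → Ω → S) (P : S → S → ℝ≥0∞) :
    Prop :=
  ∀ (t : ℕ) (h : Fin (t + 1) → S) (s' : S),
    μ {ω | X (t + 1) ω = s' ∧ ∀ i : Fin (t + 1), X i.val ω = h i}
      = P (h (Fin.last t)) s' * μ {ω | ∀ i : Fin (t + 1), X i.val ω = h i}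

def pathEvent (X : ℕ → Ω → S) (t : ℕ) (g : ℕ → S) : Set Ω := {ω | ∀ i ≤ t, X i ω = g i}

lemma pathEvent_eq_setOf_fin (X : ℕ → Ω → S) (t : ℕ) (g : ℕ → S) :
    pathEvent X t g = {ω | ∀ i : Fin (t + 1), X i ω = g i} := by
  simp [pathEvent, Fin.forall_iff]

lemma pathEvent_succ (X : ℕ → Ω → S) (t : ℕ) (g : ℕ → S) :
    pathEvent X (t + 1) g = {ω | X (t + 1) ω = g (t + 1) ∧ ω ∈ pathEvent X t g} := by
  ext ω
  simp only [pathEvent, Set.mem_ofPred_eq, Nat.le_succ_iff]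
  grind

lemma measurableSet_pathEvent [MeasurableSpace Ω] [MeasurableSpace S]
    [MeasurableSingletonClass S] {X : ℕ → Ω → S} (hX : ∀ t, Measurable (X t)) (t : ℕ)
    (g : ℕ → S) : MeasurableSet (pathEvent X t g) := by
  simp only [pathEvent, Set.ofPred_forall]
  exact .iInter fun i => .iInter fun _ => hX i (measurableSet_singleton _)

lemma retTime_eq {X : ℕ → Ω → S} {s : S} {ω : Ω} {m : ℕ} (hm : 0 < m) (hret : X m ω = s)
    (hfirst : ∀ j, 0 < j → j < m → X j ω ≠ s) : retTime X s ω = m :=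
  le_antisymm (iInf₂_le m ⟨hm, hret⟩) <| le_iInf₂ fun j hj =>
    Nat.cast_le.2 <| not_lt.1 fun hjm => hfirst j hj.1 hjm hj.2

variable [MeasurableSpace Ω] {μ : Measure Ω} {X : ℕ → Ω → S} {P : S → S → ℝ≥0∞}

lemma isMarkovChain_iff : IsMarkovChain μ X P ↔
    ∀ t g, μ (pathEvent X (t + 1) g) = P (g t) (g (t + 1)) * μ (pathEvent X t g) := by
  refine ⟨fun hM t g => ?_, fun hM t h s' => ?_⟩
  · simpa only [pathEvent_succ, pathEvent_eq_setOf_fin, Set.mem_ofPred_eq, Fin.val_last]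
      using hM t (fun i => g i) (g (t + 1))
  · let g n := if hn : n < t + 1 then h ⟨n, hn⟩ else s'
    have hg : ∀ i : Fin (t + 1), g i = h i := fun i => dif_pos i.isLt
    have hlast : g t = h (Fin.last t) := dif_pos (lt_add_one t)
    have hnext : g (t + 1) = s' := dif_neg (lt_irrefl _)
    simpa only [pathEvent_succ, pathEvent_eq_setOf_fin, Set.mem_ofPred_eq, hg, hlast, hnext]
      using hM t g

lemma IsMarkovChain.measure_pathEvent (hM : IsMarkovChain μ X P) (t : ℕ) (g : ℕ → S) :
    μ (pathEvent X t g) = μ {ω | X 0 ω = g 0} * ∏ i ∈ range t, P (g i) (g (i + 1)) := by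
  induction t with
  | zero => simp [pathEvent]
  | succ t ih => rw [isMarkovChain_iff.1 hM, ih, prod_range_succ]; ring

end Markov

section RandomMaps

variable {S : Type*}

def randomMapChain (s₀ : S) : ℕ → (ℕ → S → S) → S
  | 0, _ => s₀
  | t + 1, ω => ω t (randomMapChain s₀ t ω)

lemma pathEvent_randomMapChain (s₀ : S) (t : ℕ) {g : ℕ → S} (h0 : g 0 = s₀) :
    pathEvent (randomMapChain s₀) t g = Set.pi (range t) fun i => {f | f (g i) = g (i + 1)} := by
  induction t with
  | zero => ext ω; simp [pathEvent, randomMapChain, h0]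
  | succ t ih =>
    ext ω
    have hX (h : ω ∈ pathEvent (randomMapChain s₀) t g) : randomMapChain s₀ t ω = g t :=
      h t le_rfl
    rw [ih] at hX
    simp only [pathEvent_succ, Set.mem_ofPred_eq, ih, Set.mem_pi, mem_coe, mem_range,
      Nat.lt_succ_iff_lt_or_eq, or_imp, forall_and, forall_eq] at hX ⊢
    constructor
    · rintro ⟨hlast, hpath⟩
      exact ⟨hpath, by rwa [randomMapChain, hX hpath] at hlast⟩
    · rintro ⟨hpath, hlast⟩
      exact ⟨by rwa [randomMapChain, hX hpath], hpath⟩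

variable [Fintype S] [MeasurableSpace S] [MeasurableSingletonClass S]

lemma measurable_randomMapChain (s₀ : S) (t : ℕ) : Measurable (randomMapChain s₀ t) := by
  induction t with
  | zero => exact measurable_const
  | succ t ih =>
    have heval : Measurable fun p : (S → S) × S => p.1 p.2 :=
      measurable_from_prod_countable_left fun x => measurable_pi_apply x
    exact heval.comp ((measurable_pi_apply t).prodMk ih)

def randomMapLaw (P : S → S → ℝ≥0∞) (hP : ∀ x, ∑ y, P x y = 1) : Measure (S → S) :=
  Measure.pi fun x => (PMF.ofFintype (P x) (hP x)).toMeasure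

variable {P : S → S → ℝ≥0∞} {hP : ∀ x, ∑ y, P x y = 1}

instance : IsProbabilityMeasure (randomMapLaw P hP) := by
  unfold randomMapLaw; infer_instance

lemma randomMapLaw_apply (x y : S) : randomMapLaw P hP {f | f x = y} = P x y := by
  change randomMapLaw P hP (Function.eval x ⁻¹' {y}) = P x y
  rw [randomMapLaw, (measurePreserving_eval _ x).measure_preimage
    (measurableSet_singleton y).nullMeasurableSet, PMF.toMeasure_apply_singleton _ _
    (measurableSet_singleton y), PMF.ofFintype_apply]

lemma isMarkovChain_randomMapChain (s₀ : S) :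
    IsMarkovChain (Measure.infinitePi fun _ => randomMapLaw P hP) (randomMapChain s₀) P := by
  refine isMarkovChain_iff.2 fun t g => ?_
  by_cases h0 : g 0 = s₀
  · have hmeas : ∀ i, MeasurableSet {f : S → S | f (g i) = g (i + 1)} := fun i =>
      measurable_pi_apply (g i) (measurableSet_singleton _)
    rw [pathEvent_randomMapChain s₀ _ h0, pathEvent_randomMapChain s₀ _ h0,
      Measure.infinitePi_pi _ fun i _ => hmeas i, Measure.infinitePi_pi _ fun i _ => hmeas i,
      prod_range_succ, randomMapLaw_apply, mul_comm]
  · have hempty : ∀ t, pathEvent (randomMapChain s₀) t g = ∅ := fun t =>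
      Set.eq_empty_of_forall_notMem fun ω hω => h0 (hω 0 t.zero_le).symm
    simp [hempty]

end RandomMaps

open Fin.NatCast in
lemma Fin.natCast_ne_zero_of_lt {m i : ℕ} [NeZero m] (hi0 : 0 < i) (hi : i < m) :
    (i : Fin m) ≠ 0 := by
  rw [Ne, Fin.natCast_eq_zero]
  exact fun hdvd => hi0.ne' (Nat.eq_zero_of_dvd_of_lt hdvd hi)

section Kernel

variable {n : ℕ}

lemma mkKernel_of_ne_zero {i : Fin (n + 3)} (hi : i ≠ 0) (j : Fin (n + 3)) :
    mkKernel (n + 3) i j = if j = i + 1 then 1 else 0 := by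
  have hi' : (i : ℕ) ≠ 0 := Fin.val_ne_zero_iff.2 hi
  have hval : ((i + 1 : Fin (n + 3)) : ℕ) = ((i : ℕ) + 1) % (n + 3) := by
    simp [Fin.val_add]
  have hlt := i.isLt
  rcases eq_or_ne (i : ℕ) (n + 2) with hlast | hlast
  · rw [hlast, Nat.mod_self] at hval
    simp only [mkKernel, if_neg hi', Fin.ext_iff, hval]
    split_ifs <;> first | rfl | omega
  · rw [Nat.mod_eq_of_lt (by omega)] at hval
    simp only [mkKernel, if_neg hi', Fin.ext_iff, hval]
    split_ifs <;> first | rfl | omega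

lemma natCast_add_three_sub_one : ((n + 3 : ℕ) : ℝ≥0∞) - 1 = n + 2 := by
  rw [Nat.cast_add, show ((3 : ℕ) : ℝ≥0∞) = 2 + 1 by norm_num, ← add_assoc,
    ENNReal.add_sub_cancel_right ENNReal.one_ne_top]

lemma mkKernel_zero_zero : mkKernel (n + 3) 0 0 = 1 - ((n : ℝ≥0∞) + 2)⁻¹ := by
  simp only [mkKernel, natCast_add_three_sub_one]
  simp

lemma mkKernel_zero_one : mkKernel (n + 3) 0 1 = ((n : ℝ≥0∞) + 2)⁻¹ := by
  simp only [mkKernel, natCast_add_three_sub_one]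
  simp

lemma sum_mkKernel (i : Fin (n + 3)) : ∑ j, mkKernel (n + 3) i j = 1 := by
  by_cases hi : i = 0
  · subst hi
    have hp : ((n : ℝ≥0∞) + 2)⁻¹ ≤ 1 := ENNReal.inv_le_one.2 (le_add_left one_le_two)
    rw [Fin.sum_univ_succ, Fin.sum_univ_succ, Fin.succ_zero_eq_one, mkKernel_zero_zero,
      mkKernel_zero_one]
    simp [mkKernel, tsub_add_cancel_of_le hp]
  · simp [mkKernel_of_ne_zero hi]

end Kernel

namespace MkChain

open Fin.NatCast

variable {n : ℕ} {Ω : Type*} {X : ℕ → Ω → Fin (n + 3)}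

abbrev stay (X : ℕ → Ω → Fin (n + 3)) : Set Ω := pathEvent X 1 fun _ => 0

abbrev excursion (X : ℕ → Ω → Fin (n + 3)) : Set Ω := pathEvent X (n + 3) Nat.cast

lemma retTime_of_mem_stay {ω : Ω} (hω : ω ∈ stay X) : retTime X 0 ω = 1 :=
  mod_cast retTime_eq one_pos (hω 1 le_rfl) fun _ hj0 hj1 => absurd hj0 (by omega)

lemma retTime_of_mem_excursion {ω : Ω} (hω : ω ∈ excursion X) :
    retTime X 0 ω = ((n + 3 : ℕ) : ℕ∞) := by
  refine retTime_eq (by omega) ?_ fun j hj0 hjn => ?_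
  · rw [hω (n + 3) le_rfl, Fin.natCast_self]
  · rw [hω j hjn.le]
    exact Fin.natCast_ne_zero_of_lt hj0 hjn

lemma disjoint_stay_excursion : Disjoint (stay X) (excursion X) :=
  Set.disjoint_left.2 fun _ hstay hexc =>
    zero_ne_one (((hstay 1 le_rfl).symm.trans (hexc 1 (by omega))).trans Nat.cast_one)

lemma stay_union_excursion_subset : stay X ∪ excursion X ⊆ {ω | X 0 ω = 0} := by
  rintro ω (hω | hω)
  · exact hω 0 (Nat.zero_le _)
  · simpa using hω 0 (Nat.zero_le _)

variable [MeasurableSpace Ω] {μ : Measure Ω}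

lemma measure_stay (hM : IsMarkovChain μ X (mkKernel (n + 3))) :
    μ (stay X) = μ {ω | X 0 ω = 0} * (1 - ((n : ℝ≥0∞) + 2)⁻¹) := by
  simp [hM.measure_pathEvent, mkKernel_zero_zero]

lemma measure_excursion (hM : IsMarkovChain μ X (mkKernel (n + 3))) :
    μ (excursion X) = μ {ω | X 0 ω = 0} * ((n : ℝ≥0∞) + 2)⁻¹ := by
  have hstep : ∀ i ∈ range (n + 2),
      mkKernel (n + 3) ((i + 1 : ℕ) : Fin (n + 3)) ((i + 1 + 1 : ℕ) : Fin (n + 3)) = 1 := by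
    intro i hi
    rw [Nat.cast_succ (i + 1),
      mkKernel_of_ne_zero (Fin.natCast_ne_zero_of_lt i.succ_pos (by simp at hi; omega)), if_pos rfl]
  rw [hM.measure_pathEvent, prod_range_succ', prod_eq_one hstep]
  simp [mkKernel_zero_one]

lemma measure_stay_add_measure_excursion (hM : IsMarkovChain μ X (mkKernel (n + 3))) :
    μ (stay X) + μ (excursion X) = μ {ω | X 0 ω = 0} := by
  have hp : ((n : ℝ≥0∞) + 2)⁻¹ ≤ 1 := ENNReal.inv_le_one.2 (le_add_left one_le_two)
  rw [measure_stay hM, measure_excursion hM, ← mul_add, tsub_add_cancel_of_le hp, mul_one]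

variable [IsFiniteMeasure μ]

lemma restrict_start_eq (hX : ∀ t, Measurable (X t)) (hM : IsMarkovChain μ X (mkKernel (n + 3))) :
    μ.restrict {ω | X 0 ω = 0} = μ.restrict (stay X) + μ.restrict (excursion X) := by
  have hexc := measurableSet_pathEvent hX (n + 3) Nat.cast
  have hunion : μ (stay X ∪ excursion X) = μ {ω | X 0 ω = 0} := by
    rw [measure_union disjoint_stay_excursion hexc, measure_stay_add_measure_excursion hM]
  rw [← Measure.restrict_union disjoint_stay_excursion hexc]
  exact Measure.restrict_congr_set (ae_eq_of_subset_of_measure_ge stay_union_excursion_subset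
    hunion.ge ((measurableSet_pathEvent hX _ _).union hexc).nullMeasurableSet
    (measure_ne_top _ _)).symm

lemma lintegral_retTime_cond (hX : ∀ t, Measurable (X t))
    (hM : IsMarkovChain μ X (mkKernel (n + 3))) (h0 : μ {ω | X 0 ω = 0} ≠ 0) :
    ∫⁻ ω, (retTime X 0 ω : ℝ≥0∞) ∂(ProbabilityTheory.cond μ {ω | X 0 ω = 0}) = 2 := by
  have hstay : ∫⁻ ω in stay X, (retTime X 0 ω : ℝ≥0∞) ∂μ = μ (stay X) := by
    rw [setLIntegral_congr_fun (measurableSet_pathEvent hX _ _)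
      fun ω hω => by rw [retTime_of_mem_stay hω], setLIntegral_const]
    simp
  have hexc : ∫⁻ ω in excursion X, (retTime X 0 ω : ℝ≥0∞) ∂μ
      = μ (excursion X) + μ {ω | X 0 ω = 0} := by
    rw [setLIntegral_congr_fun (measurableSet_pathEvent hX _ _)
      fun ω hω => by rw [retTime_of_mem_excursion hω], setLIntegral_const, measure_excursion hM,
      show (((n + 3 : ℕ) : ℕ∞) : ℝ≥0∞) = ((n : ℝ≥0∞) + 2) + 1 by simp; ring, add_mul, one_mul,
      mul_left_comm, ENNReal.mul_inv_cancel (by positivity) (by simp), mul_one, add_comm]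
  rw [ProbabilityTheory.cond, lintegral_smul_measure, restrict_start_eq hX hM,
    lintegral_add_measure, hstay, hexc, ← add_assoc, measure_stay_add_measure_excursion hM,
    smul_eq_mul, ← two_mul, ← mul_assoc, mul_comm _ (2 : ℝ≥0∞), mul_assoc,
    ENNReal.inv_mul_cancel h0 (measure_ne_top _ _), mul_one]

lemma cond_retTime_eq (hX : ∀ t, Measurable (X t))
    (hM : IsMarkovChain μ X (mkKernel (n + 3))) (h0 : μ {ω | X 0 ω = 0} ≠ 0) :
    ProbabilityTheory.cond μ {ω | X 0 ω = 0} {ω | retTime X 0 ω = ((n + 3 : ℕ) : ℕ∞)}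
      = ((n : ℝ≥0∞) + 2)⁻¹ := by
  have hstay : {ω | retTime X 0 ω = ((n + 3 : ℕ) : ℕ∞)} ∩ stay X = ∅ :=
    Set.eq_empty_of_forall_notMem fun ω ⟨hret, hω⟩ => by
      rw [Set.mem_ofPred_eq, retTime_of_mem_stay hω] at hret
      exact absurd (ENat.natCast_inj.1 hret) (by omega)
  have hexc : {ω | retTime X 0 ω = ((n + 3 : ℕ) : ℕ∞)} ∩ excursion X = excursion X :=
    Set.inter_eq_right.2 fun ω hω => retTime_of_mem_excursion hω
  rw [ProbabilityTheory.cond, restrict_start_eq hX hM, Measure.smul_apply, Measure.add_apply,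
    Measure.restrict_apply' (measurableSet_pathEvent hX _ _),
    Measure.restrict_apply' (measurableSet_pathEvent hX _ _), hstay, hexc, measure_empty,
    zero_add, measure_excursion hM, smul_eq_mul, ← mul_assoc,
    ENNReal.inv_mul_cancel h0 (measure_ne_top _ _), one_mul]

end MkChain

lemma exists_ofReal_mul_exp_lt_inv (a : ℝ) {c : ℝ} (hc : 0 < c) :
    ∃ n : ℕ, ENNReal.ofReal (a * Real.exp (-(((n + 3 : ℕ) : ℝ) / c))) < ((n : ℝ≥0∞) + 2)⁻¹ := by
  have hlim : Tendsto (fun x : ℝ => |a| * (x * Real.exp (-(x / c)))) atTop (𝓝 0) := by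
    have := (tendsto_rpow_mul_exp_neg_mul_atTop_nhds_zero 1 c⁻¹ (inv_pos.2 hc)).const_mul |a|
    simpa [div_eq_inv_mul] using this
  have hnat : Tendsto (fun n : ℕ => ((n + 3 : ℕ) : ℝ)) atTop atTop :=
    tendsto_natCast_atTop_atTop.comp (tendsto_add_atTop_nat 3)
  obtain ⟨n, hn⟩ := ((hlim.comp hnat).eventually (gt_mem_nhds one_pos)).exists
  refine ⟨n, ?_⟩
  set x : ℝ := ((n + 3 : ℕ) : ℝ)
  have hnx : (n : ℝ) + 2 ≤ x := by push_cast [x]; linarith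
  have hlt : a * Real.exp (-(x / c)) * (n + 2) < 1 :=
    calc a * Real.exp (-(x / c)) * (n + 2)
        ≤ |a| * Real.exp (-(x / c)) * (n + 2) := by gcongr; exact le_abs_self a
      _ ≤ |a| * Real.exp (-(x / c)) * x := by gcongr
      _ = |a| * (x * Real.exp (-(x / c))) := by ring
      _ < 1 := hn
  rw [← ENNReal.ofReal_natCast, ← ENNReal.ofReal_ofNat 2, ← ENNReal.ofReal_add (by positivity)
    (by positivity), ← ENNReal.ofReal_inv_of_pos (by positivity),
    ENNReal.ofReal_lt_ofReal_iff (by positivity), ← one_div, lt_div_iff₀ (by positivity)]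
  exact hlt

/-- there is no exponential concentration of first return times in terms of
the expected recurrence time `ρ_s`; in particular the chains `M_k` have `ρ_{s_1} = 2` yet
`P_{s_1}[H_{s_1}^+ = k] = 1/(k-1)`. -/
theorem stmt17 :
    (¬ ∃ a b : ℝ, 0 < a ∧ 0 < b ∧
      ∀ (S : Type) [Fintype S] [DecidableEq S] [MeasurableSpace S]
        [MeasurableSingletonClass S]
        (Ω : Type) [MeasurableSpace Ω] (μ : Measure Ω) [IsProbabilityMeasure μ]
        (X : ℕ → Ω → S) (P : S → S → ℝ≥0∞),
        (∀ t, Measurable (X t)) → (∀ x, ∑ y, P x y = 1) →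
        (∀ (t : ℕ) (h : Fin (t + 1) → S) (s' : S),
          μ {ω | X (t + 1) ω = s' ∧ ∀ i : Fin (t + 1), X i.val ω = h i}
            = P (h (Fin.last t)) s' * μ {ω | ∀ i : Fin (t + 1), X i.val ω = h i}) →
        ∀ s : S, μ {ω | X 0 ω = s} ≠ 0 →
        ∀ ρ : ℝ≥0∞,
          ρ = ∫⁻ ω, (retTime X s ω : ℝ≥0∞) ∂(ProbabilityTheory.cond μ {ω | X 0 ω = s}) →
          ρ ≠ ⊤ →
        ∀ t : ℝ, 0 < t →
          (ProbabilityTheory.cond μ {ω | X 0 ω = s})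
              {ω | ENNReal.ofReal t ≤ (retTime X s ω : ℝ≥0∞)}
            ≤ ENNReal.ofReal (a * Real.exp (-(t / (b * ρ.toReal)))))
    ∧ (∀ (k : ℕ) (hk : 3 ≤ k)
        (Ω : Type) [MeasurableSpace Ω] (μ : Measure Ω) [IsProbabilityMeasure μ]
        (X : ℕ → Ω → Fin k),
        (∀ t, Measurable (X t)) →
        (∀ (t : ℕ) (h : Fin (t + 1) → Fin k) (s' : Fin k),
          μ {ω | X (t + 1) ω = s' ∧ ∀ i : Fin (t + 1), X i.val ω = h i}
            = mkKernel k (h (Fin.last t)) s'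
              * μ {ω | ∀ i : Fin (t + 1), X i.val ω = h i}) →
        μ {ω | X 0 ω = (⟨0, by omega⟩ : Fin k)} ≠ 0 →
        (∫⁻ ω, (retTime X (⟨0, by omega⟩ : Fin k) ω : ℝ≥0∞)
            ∂(ProbabilityTheory.cond μ {ω | X 0 ω = (⟨0, by omega⟩ : Fin k)}) = 2)
        ∧ (ProbabilityTheory.cond μ {ω | X 0 ω = (⟨0, by omega⟩ : Fin k)})
              {ω | retTime X (⟨0, by omega⟩ : Fin k) ω = (k : ℕ∞)}
            = 1 / ((k : ℝ≥0∞) - 1)) := by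
  refine ⟨fun ⟨a, b, _, hb, hbound⟩ => ?_, fun k hk Ω _ μ _ X hX hM h0 => ?_⟩
  · have hlower (n : ℕ) : ((n : ℝ≥0∞) + 2)⁻¹ ≤
        ENNReal.ofReal (a * Real.exp (-(((n + 3 : ℕ) : ℝ) / (b * 2)))) := by
      let μ := Measure.infinitePi fun _ : ℕ => randomMapLaw (mkKernel (n + 3)) sum_mkKernel
      let X := randomMapChain (0 : Fin (n + 3))
      have hM : IsMarkovChain μ X (mkKernel (n + 3)) := isMarkovChain_randomMapChain 0
      have h0 : μ {ω | X 0 ω = 0} ≠ 0 := by simp [X, randomMapChain]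
      have hX := measurable_randomMapChain (0 : Fin (n + 3))
      have hρ := (MkChain.lintegral_retTime_cond hX hM h0).symm
      calc ((n : ℝ≥0∞) + 2)⁻¹
          = ProbabilityTheory.cond μ {ω | X 0 ω = 0} {ω | retTime X 0 ω = ((n + 3 : ℕ) : ℕ∞)} :=
            (MkChain.cond_retTime_eq hX hM h0).symm
        _ ≤ ProbabilityTheory.cond μ {ω | X 0 ω = 0}
            {ω | ENNReal.ofReal ((n + 3 : ℕ) : ℝ) ≤ (retTime X 0 ω : ℝ≥0∞)} :=
            measure_mono fun ω (hω : retTime X 0 ω = _) => show ENNReal.ofReal _ ≤ _ by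
              rw [hω, ENNReal.ofReal_natCast]
              rfl
        _ ≤ _ := by
          simpa using hbound (Fin (n + 3)) _ μ X _ hX sum_mkKernel hM 0 h0 2 hρ
            ENNReal.ofNat_ne_top _ (by positivity)
    obtain ⟨n, hn⟩ := exists_ofReal_mul_exp_lt_inv a (mul_pos hb two_pos)
    exact (hn.trans_le (hlower n)).false
  · obtain ⟨n, rfl⟩ : ∃ n, k = n + 3 := ⟨k - 3, by omega⟩
    rw [natCast_add_three_sub_one, one_div]
    exact ⟨MkChain.lintegral_retTime_cond hX hM h0, MkChain.cond_retTime_eq hX hM h0⟩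
end
end
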